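/- arXiv:1707.09277 — 5 statements merged into one kernel-verified Lean document; each statement's English description precedes it below -/
import Mathlib

section
/- Let d ≥ 1 and ϑ ∈ (0, π/2]. There exist L ∈ ℕ, an angle θ ∈ (0, π/2], and unit vectors v¹, …, v^L ∈ ℝ^d, all depending only on the dimension d and on ϑ (in fact one may take θ = ϑ/3), such that for every ϑ-bounded configuration Γ and every x ∈ ℝ^d there exists m ∈ {1, …, L} with V(v^m, θ) ⊂ Γ(x). -/
open MeasureTheory Metric
open scoped ENNReal

noncomputable section

/-- `d`-dimensional Euclidean space. -/
abbrev Euc (d : ℕ) : Type := EuclideanSpace ℝ (Fin d)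

/-- The open cone `Ṽ(v,θ)` with axis `v` and apex angle `θ`. -/
def coneSet (d : ℕ) (v : Euc d) (θ : ℝ) : Set (Euc d) :=
  {h | h ≠ 0 ∧ Real.cos θ < (inner ℝ v h : ℝ) / ‖h‖}

/-- The double cone `V(v,θ) = Ṽ(v,θ) ∪ (−Ṽ(v,θ))`. -/
def doubleCone (d : ℕ) (v : Euc d) (θ : ℝ) : Set (Euc d) :=
  {h | h ∈ coneSet d v θ ∨ -h ∈ coneSet d v θ}

/-- A configuration assigns to each point of `ℝ^d` a double cone with apex at `0`,
recorded via its (unit) symmetry axis and its apex angle in `(0, π/2]`. -/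
structure Config (d : ℕ) where
  axis : Euc d → Euc d
  angle : Euc d → ℝ
  axis_norm : ∀ x, ‖axis x‖ = 1
  angle_mem : ∀ x, angle x ∈ Set.Ioc 0 (Real.pi / 2)

/-- The double cone `Γ(x)` assigned to `x` by a configuration `Γ`. -/
def Config.cone {d : ℕ} (Γ : Config d) (x : Euc d) : Set (Euc d) :=
  doubleCone d (Γ.axis x) (Γ.angle x)

/-- `Γ` is `ϑ`-bounded: every apex angle is at least `ϑ`. -/
def Config.Bounded {d : ℕ} (Γ : Config d) (ϑ : ℝ) : Prop :=
  ∀ x, ϑ ≤ Γ.angle x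

/-- `Γ` is `ϑ`-admissible: `ϑ`-bounded and `{(x,y) | y - x ∈ Γ(x)}` is Borel. -/
def Config.Admissible {d : ℕ} (Γ : Config d) (ϑ : ℝ) : Prop :=
  Γ.Bounded ϑ ∧ MeasurableSet {p : Euc d × Euc d | p.2 - p.1 ∈ Γ.cone p.1}

/-- The indicator sum `𝟙_{V^Γ[x]}(y) + 𝟙_{V^Γ[y]}(x)`, valued in `ℝ≥0∞`. -/
def indSum {d : ℕ} (Γ : Config d) (x y : Euc d) : ℝ≥0∞ :=
  (Γ.cone x).indicator (fun _ => (1 : ℝ≥0∞)) (y - x) +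
  (Γ.cone y).indicator (fun _ => (1 : ℝ≥0∞)) (x - y)

/-- The kernel `|x - y| ^ (-d-α)` as an `ℝ≥0∞`-valued function (equal to `∞` on the diagonal). -/
def stbl (d : ℕ) (α : ℝ) (x y : Euc d) : ℝ≥0∞ :=
  (ENNReal.ofReal (dist x y)) ^ (-(d : ℝ) - α)

/-- The embedding of the integer lattice `ℤ^d` into `ℝ^d`. -/
def latt (d : ℕ) (z : Fin d → ℤ) : Euc d :=
  (WithLp.equiv 2 (Fin d → ℝ)).symm (fun i => (z i : ℝ))

/-- The open cube `A_h(u)` of side length `h` centered at `u` (w.r.t. the max norm). -/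
def cube (d : ℕ) (h : ℝ) (u : Euc d) : Set (Euc d) :=
  {x | ∀ i, |x i - u i| < h / 2}

/-- The translate `V[x] = V + x` of a set `V`. -/
def shiftSet (d : ℕ) (V : Set (Euc d)) (x : Euc d) : Set (Euc d) :=
  {y | y - x ∈ V}

/-- The "half-set" `V_r = {y ∈ V | closedBall y r ⊆ V}` (double half-cone for `V` a double cone). -/
def halfSet (d : ℕ) (V : Set (Euc d)) (r : ℝ) : Set (Euc d) :=
  {y | y ∈ V ∧ Metric.closedBall y r ⊆ V}

/-- Adjacency of `w` and `z` in the (undirected) graph `G_U(Γ)`. -/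
def adjIn (d : ℕ) (Γ : Config d) (U : Set (Euc d)) (w z : Euc d) : Prop :=
  (w ∈ U ∧ z - w ∈ Γ.cone w) ∨ (z ∈ U ∧ w - z ∈ Γ.cone z)

/-- Adjacency of two lattice points in the graph `G(Γ)`. -/
def adjL (d : ℕ) (Γ : Config d) (w z : Fin d → ℤ) : Prop :=
  latt d z - latt d w ∈ Γ.cone (latt d w) ∨ latt d w - latt d z ∈ Γ.cone (latt d z)

/-- A lattice point `x` is `r`-`R`-connected if every lattice point within distance `r`
is connected to `x` by an undirected edge path in `G(Γ)` staying in the closed `R`-ball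
around `x`. -/
def rRConnected (d : ℕ) (Γ : Config d) (r R : ℝ) (x : Fin d → ℤ) : Prop :=
  ∀ y : Fin d → ℤ, dist (latt d y) (latt d x) ≤ r →
    ∃ (N : ℕ) (p : ℕ → Fin d → ℤ), p 0 = x ∧ p N = y ∧
      (∀ i < N, adjL d Γ (p i) (p (i + 1))) ∧
      ∀ i ≤ N, dist (latt d (p i)) (latt d x) ≤ R

/-- Sum over pairs of lattice points satisfying a predicate `P` of
`(f x - f y)² K x y`, valued in `ℝ≥0∞`. -/
def dSum (d : ℕ) (f : (Fin d → ℤ) → ℝ) (K : (Fin d → ℤ) → (Fin d → ℤ) → ℝ≥0∞)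
    (P : (Fin d → ℤ) → (Fin d → ℤ) → Prop) : ℝ≥0∞ :=
  ∑' q : (Fin d → ℤ) × (Fin d → ℤ),
    Set.indicator {q : (Fin d → ℤ) × (Fin d → ℤ) | P q.1 q.2}
      (fun q => ENNReal.ofReal ((f q.1 - f q.2) ^ 2) * K q.1 q.2) q


/-!
The unit sphere is compact, so finitely many unit vectors `v¹, …, v^L` come within angle `2ϑ/3` of
every unit vector. Choosing `v^m` within `2ϑ/3` of the axis of `Γ(x)`, the triangle inequality for
angles puts the cone of aperture `ϑ/3` around `v^m` inside the cone of aperture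
`2ϑ/3 + ϑ/3 = ϑ` around that axis, hence inside `Γ(x)`.
-/

open InnerProductGeometry

lemma IsCompact.exists_finset_angle_lt {E : Type*} [NormedAddCommGroup E] [InnerProductSpace ℝ E]
    {s : Set E} (hs : IsCompact s) (h0 : (0 : E) ∉ s) {ε : ℝ} (hε : 0 < ε) :
    ∃ t : Finset E, (∀ w ∈ t, w ∈ s) ∧ ∀ u ∈ s, ∃ w ∈ t, angle w u < ε := by
  have hnhds : ∀ w ∈ s, {u | angle w u < ε} ∈ nhds w := by
    intro w hw
    have hw0 : w ≠ 0 := fun h => h0 (h ▸ hw)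
    have hcont : ContinuousAt (fun u => angle w u) w :=
      (continuousAt_angle (x := (w, w)) hw0 hw0).comp (continuousAt_const.prodMk continuousAt_id)
    exact hcont.preimage_mem_nhds (Iio_mem_nhds (by rwa [angle_self hw0]))
  obtain ⟨t, hts, hcover⟩ := hs.elim_nhds_subcover _ hnhds
  refine ⟨t, hts, fun u hu => ?_⟩
  simpa using hcover hu

lemma mem_coneSet_iff {d : ℕ} {v h : Euc d} {θ : ℝ} (hv : ‖v‖ = 1) (hθ₀ : 0 ≤ θ)
    (hθ : θ ≤ Real.pi) : h ∈ coneSet d v θ ↔ h ≠ 0 ∧ angle v h < θ := by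
  have hcos : (inner ℝ v h : ℝ) / ‖h‖ = Real.cos (angle v h) := by
    rw [cos_angle, hv, one_mul]
  rw [coneSet, Set.mem_ofPred_eq, hcos,
    Real.strictAntiOn_cos.lt_iff_gt ⟨hθ₀, hθ⟩ ⟨angle_nonneg v h, angle_le_pi v h⟩]

lemma coneSet_subset_coneSet {d : ℕ} {u w : Euc d} {θ φ : ℝ} (hu : ‖u‖ = 1) (hw : ‖w‖ = 1)
    (hθ : 0 ≤ θ) (hφ : φ ≤ Real.pi) (huw : angle u w + θ ≤ φ) :
    coneSet d w θ ⊆ coneSet d u φ := by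
  have hθφ : θ ≤ φ := by linarith [angle_nonneg u w]
  intro h hh
  rw [mem_coneSet_iff hw hθ (hθφ.trans hφ)] at hh
  rw [mem_coneSet_iff hu (hθ.trans hθφ) hφ]
  exact ⟨hh.1, by linarith [angle_le_angle_add_angle u w h]⟩

lemma doubleCone_mono {d : ℕ} {u w : Euc d} {θ φ : ℝ} (h : coneSet d w θ ⊆ coneSet d u φ) :
    doubleCone d w θ ⊆ doubleCone d u φ :=
  fun _ => Or.imp (@h _) (@h _)

/-- Lemma 2.2: a finite family of reference cones, depending only on `d` and
`ϑ`, such that every cone of any `ϑ`-bounded configuration contains one of them. -/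
theorem stmt4 (d : ℕ) (hd : 1 ≤ d) (ϑ : ℝ) (hϑ : ϑ ∈ Set.Ioc 0 (Real.pi / 2)) :
    ∃ (L : ℕ) (θ : ℝ) (v : Fin L → Euc d), 0 < L ∧ θ ∈ Set.Ioc 0 (Real.pi / 2) ∧ θ = ϑ / 3 ∧
      (∀ m, ‖v m‖ = 1) ∧
      ∀ Γ : Config d, Γ.Bounded ϑ → ∀ x : Euc d,
        ∃ m : Fin L, doubleCone d (v m) θ ⊆ Γ.cone x := by
  obtain ⟨hϑ₀, hϑ⟩ := hϑ
  obtain ⟨t, hts, hnet⟩ := (isCompact_sphere (0 : Euc d) 1).exists_finset_angle_lt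
    (by simp) (by positivity : 0 < 2 * ϑ / 3)
  have : Nonempty (Fin d) := ⟨⟨0, hd⟩⟩
  obtain ⟨u, hu⟩ := (NormedSpace.sphere_nonempty (x := (0 : Euc d))).2 zero_le_one
  have htne : t.Nonempty := let ⟨w, hw, _⟩ := hnet u hu; ⟨w, hw⟩
  have hunit : ∀ w ∈ t, ‖w‖ = 1 := fun w hw => by simpa using hts w hw
  refine ⟨t.card, ϑ / 3, fun m => t.equivFin.symm m, t.card_pos.2 htne,
    ⟨by positivity, by linarith⟩, rfl, fun m => hunit _ (t.equivFin.symm m).2, ?_⟩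
  intro Γ hΓ x
  obtain ⟨w, hwt, hw⟩ := hnet (Γ.axis x) (by simp [Γ.axis_norm x])
  refine ⟨t.equivFin ⟨w, hwt⟩, ?_⟩
  simp only [Equiv.symm_apply_apply]
  refine doubleCone_mono (coneSet_subset_coneSet (Γ.axis_norm x) (hunit w hwt) (by positivity)
    (by linarith [(Γ.angle_mem x).2]) ?_)
  linarith [angle_comm w (Γ.axis x), hΓ x]
end
end

section
/- Let d ≥ 1, ϑ ∈ (0, π/2], and let Γ be a ϑ-bounded configuration on ℝ^d. Then there exists a configuration Γ̃ : ℝ^d → 𝒱 such that the image Γ̃(ℝ^d) is a finite set of double cones, each of apex angle ϑ/3, its cardinality is bounded by a constant depending only on d and ϑ, and Γ̃(x) ⊂ Γ(x) for every x ∈ ℝ^d. -/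
open MeasureTheory Metric
open scoped ENNReal

noncomputable section

/-! By Cauchy–Schwarz, moving the axis of a cone by `δ` moves `⟪v, h⟫ / ‖h‖` by at most `δ`. So, with `ε = cos (ϑ/3) - cos ϑ`, replace each axis `Γ.axis x` by a point
of a fixed finite `ε`-net of the unit sphere and shrink the angle to `ϑ/3`; the number of cones
used is at most the size of the net, which depends only on `d` and `ϑ`. -/

lemma coneSet_subset_coneSet_s5 {d : ℕ} {u v : Euc d} {θ θ' : ℝ}
    (huv : ‖u - v‖ < Real.cos θ' - Real.cos θ) :
    coneSet d v θ' ⊆ coneSet d u θ := by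
  rintro h ⟨hne, hv⟩
  have hpos : 0 < ‖h‖ := norm_pos_iff.mpr hne
  rw [lt_div_iff₀ hpos] at hv
  refine ⟨hne, (lt_div_iff₀ hpos).mpr ?_⟩
  have hdev : -(‖u - v‖ * ‖h‖) ≤ inner ℝ (u - v) h :=
    neg_le_of_abs_le (abs_real_inner_le_norm _ _)
  calc Real.cos θ * ‖h‖ ≤ Real.cos θ' * ‖h‖ - ‖u - v‖ * ‖h‖ := by nlinarith
    _ < inner ℝ v h + inner ℝ (u - v) h := by linarith
    _ = inner ℝ u h := by rw [inner_sub_left]; ring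

lemma doubleCone_subset_doubleCone {d : ℕ} {u v : Euc d} {θ θ' : ℝ}
    (huv : ‖u - v‖ < Real.cos θ' - Real.cos θ) :
    doubleCone d v θ' ⊆ doubleCone d u θ :=
  fun _ => Or.imp (fun h => coneSet_subset_coneSet_s5 huv h) (fun h => coneSet_subset_coneSet_s5 huv h)

lemma cos_lt_cos_div_three {θ : ℝ} (h₀ : 0 < θ) (hπ : θ ≤ Real.pi) :
    Real.cos θ < Real.cos (θ / 3) :=
  Real.cos_lt_cos_of_nonneg_of_le_pi (by linarith) hπ (by linarith)

lemma Config.cos_angle_le {d : ℕ} {Γ : Config d} {ϑ : ℝ} (hΓ : Γ.Bounded ϑ) (hϑ : 0 ≤ ϑ)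
    (x : Euc d) : Real.cos (Γ.angle x) ≤ Real.cos ϑ :=
  Real.cos_le_cos_of_nonneg_of_le_pi hϑ (by linarith [(Γ.angle_mem x).2, Real.pi_pos]) (hΓ x)

lemma Config.axis_mem_sphere {d : ℕ} (Γ : Config d) (x : Euc d) :
    Γ.axis x ∈ sphere (0 : Euc d) 1 :=
  mem_sphere_zero_iff_norm.mpr (Γ.axis_norm x)

lemma Set.Finite.range_comp_of_forall_mem {α β γ : Type*} {t : Set β} (ht : t.Finite)
    {f : α → β} (hf : ∀ a, f a ∈ t) (g : β → γ) :
    (Set.range (g ∘ f)).Finite ∧ (Set.range (g ∘ f)).ncard ≤ t.ncard := by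
  have hsub : Set.range (g ∘ f) ⊆ g '' t := by
    rintro _ ⟨a, rfl⟩
    exact Set.mem_image_of_mem g (hf a)
  exact ⟨(ht.image g).subset hsub,
    (Set.ncard_le_ncard hsub (ht.image g)).trans (Set.ncard_image_le ht)⟩

theorem stmt5_general (d : ℕ) (ϑ : ℝ) (hϑ : ϑ ∈ Set.Ioc 0 (Real.pi / 2)) :
    ∃ L : ℕ, ∀ Γ : Config d, Γ.Bounded ϑ →
      ∃ Γ' : Config d, (∀ x, Γ'.angle x = ϑ / 3) ∧
        (Set.range Γ'.cone).Finite ∧ (Set.range Γ'.cone).ncard ≤ L ∧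
        ∀ x, Γ'.cone x ⊆ Γ.cone x := by
  obtain ⟨hϑ₀, hϑπ⟩ := hϑ
  have hε : 0 < Real.cos (ϑ / 3) - Real.cos ϑ :=
    sub_pos.mpr (cos_lt_cos_div_three hϑ₀ (by linarith [Real.pi_pos]))
  obtain ⟨t, hts, htf, hnet⟩ := (isCompact_sphere (0 : Euc d) 1).finite_cover_balls hε
  refine ⟨t.ncard, fun Γ hΓ => ?_⟩
  choose f hft hf using fun x => Set.mem_iUnion₂.mp (hnet (Γ.axis_mem_sphere x))
  let Γ' : Config d :=
    ⟨f, fun _ => ϑ / 3, fun x => mem_sphere_zero_iff_norm.mp (hts (hft x)),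
      fun _ => ⟨by linarith, by linarith⟩⟩
  obtain ⟨hfin, hcard⟩ := htf.range_comp_of_forall_mem hft (doubleCone d · (ϑ / 3))
  refine ⟨Γ', fun _ => rfl, hfin, hcard, fun x => doubleCone_subset_doubleCone ?_⟩
  rw [← dist_eq_norm]
  linarith [mem_ball.mp (hf x), Γ.cos_angle_le hΓ hϑ₀.le x]

/-- Corollary 2.4: a `ϑ`-bounded configuration contains a sub-configuration
with finite image, consisting of double cones of apex angle `ϑ/3`, whose cardinality is bounded
by a constant depending only on `d` and `ϑ`. -/
theorem stmt5 (d : ℕ) (hd : 1 ≤ d) (ϑ : ℝ) (hϑ : ϑ ∈ Set.Ioc 0 (Real.pi / 2)) :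
    ∃ L : ℕ, ∀ Γ : Config d, Γ.Bounded ϑ →
      ∃ Γ' : Config d, (∀ x, Γ'.angle x = ϑ / 3) ∧
        (Set.range Γ'.cone).Finite ∧ (Set.range Γ'.cone).ncard ≤ L ∧
        ∀ x, Γ'.cone x ⊆ Γ.cone x :=
  stmt5_general d ϑ hϑ
end
end

section
/- Let V ⊂ ℝ^d be a double cone with apex at 0 and let h > 0. Then for every x ∈ ℝ^d and every ξ ∈ A_h(x) one has V_{h√d}[ξ] ⊂ V_{(h/2)√d}[x] ⊂ V[ξ]. Equivalently, ⋃_{ξ ∈ A_h(x)} V_{h√d}[ξ] ⊂ V_{(h/2)√d}[x] ⊂ ⋂_{ξ ∈ A_h(x)} V[ξ]. -/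
open MeasureTheory Metric
open scoped ENNReal

noncomputable section

lemma norm_sub_le_of_mem_cube {d : ℕ} {h : ℝ} (hh : 0 ≤ h) {x ξ : Euc d}
    (hξ : ξ ∈ cube d h x) : ‖ξ - x‖ ≤ h / 2 * Real.sqrt d := by
  have hsum : ∑ i, ‖(ξ - x) i‖ ^ 2 ≤ d * (h / 2) ^ 2 := by
    simpa using Finset.sum_le_card_nsmul Finset.univ (fun i ↦ ‖(ξ - x) i‖ ^ 2) ((h / 2) ^ 2)
      fun i _ ↦ pow_le_pow_left₀ (norm_nonneg _) (by simpa using (hξ i).le) 2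
  calc ‖ξ - x‖ = Real.sqrt (∑ i, ‖(ξ - x) i‖ ^ 2) := EuclideanSpace.norm_eq _
    _ ≤ Real.sqrt (d * (h / 2) ^ 2) := Real.sqrt_le_sqrt hsum
    _ = h / 2 * Real.sqrt d := by
      rw [Real.sqrt_mul (Nat.cast_nonneg d), Real.sqrt_sq (by positivity), mul_comm]

section HalfSet

variable {d : ℕ} {V : Set (Euc d)} {x ξ : Euc d} {r : ℝ}

lemma shiftSet_halfSet_subset_shiftSet (hξ : ‖ξ - x‖ ≤ r) :
    shiftSet d (halfSet d V r) x ⊆ shiftSet d V ξ := fun y ⟨_, hball⟩ ↦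
  hball <| by rwa [Metric.mem_closedBall, dist_eq_norm, sub_sub_sub_cancel_left, norm_sub_rev]

lemma shiftSet_halfSet_add_subset_shiftSet_halfSet {s : ℝ} (hξ : ‖ξ - x‖ ≤ r) (hs : 0 ≤ s) :
    shiftSet d (halfSet d V (r + s)) ξ ⊆ shiftSet d (halfSet d V s) x := by
  rintro y ⟨_, hball⟩
  have hsub : Metric.closedBall (y - x) s ⊆ Metric.closedBall (y - ξ) (r + s) :=
    Metric.closedBall_subset_closedBall' <| by
      rw [dist_eq_norm, sub_sub_sub_cancel_left]
      linarith
  exact ⟨hball (hsub (Metric.mem_closedBall_self hs)), hsub.trans hball⟩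

end HalfSet

theorem stmt6_general (d : ℕ) (v : Euc d) (θ : ℝ) (h : ℝ) (hh : 0 < h)
    (x ξ : Euc d) (hξ : ξ ∈ cube d h x) :
    shiftSet d (halfSet d (doubleCone d v θ) (h * Real.sqrt d)) ξ ⊆
      shiftSet d (halfSet d (doubleCone d v θ) (h / 2 * Real.sqrt d)) x ∧
    shiftSet d (halfSet d (doubleCone d v θ) (h / 2 * Real.sqrt d)) x ⊆
      shiftSet d (doubleCone d v θ) ξ := by
  have hξx := norm_sub_le_of_mem_cube hh.le hξ
  refine ⟨?_, shiftSet_halfSet_subset_shiftSet hξx⟩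
  rw [show h * Real.sqrt d = h / 2 * Real.sqrt d + h / 2 * Real.sqrt d by ring]
  exact shiftSet_halfSet_add_subset_shiftSet_halfSet hξx (by positivity)

/-- Lemma 2.5: for every `ξ` in the cube `A_h(x)`,
`V_{h√d}[ξ] ⊆ V_{(h/2)√d}[x] ⊆ V[ξ]`. -/
theorem stmt6 (d : ℕ) (hd : 1 ≤ d) (v : Euc d) (hv : ‖v‖ = 1) (θ : ℝ)
    (hθ : θ ∈ Set.Ioc 0 (Real.pi / 2)) (h : ℝ) (hh : 0 < h)
    (x ξ : Euc d) (hξ : ξ ∈ cube d h x) :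
    shiftSet d (halfSet d (doubleCone d v θ) (h * Real.sqrt d)) ξ ⊆
      shiftSet d (halfSet d (doubleCone d v θ) (h / 2 * Real.sqrt d)) x ∧
    shiftSet d (halfSet d (doubleCone d v θ) (h / 2 * Real.sqrt d)) x ⊆
      shiftSet d (doubleCone d v θ) ξ :=
  stmt6_general d v θ h hh x ξ hξ
end
end

section
/- Let d ≥ 1, ϑ ∈ (0, π/2], and let C̃ = Ṽ(v,θ) be a cone with apex angle θ ≥ ϑ. Fix r > 0 and assume R > (r + √d)/sin(ϑ). Then for every x ∈ ℝ^d the set B_R(x) ∩ (x + C̃) contains a lattice point y ∈ ℤ^d such that the closed ball of radius r around y is contained in x + C̃. -/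
open MeasureTheory Metric
open scoped ENNReal

noncomputable section

/-!
A ball of radius `ρ < t sin θ` around `x + t v` lies in `x + Ṽ(v, θ)`: `‖h - t v‖² < t² sin² θ`
rearranges to `‖h‖² + t² cos² θ < 2 t ⟪v, h⟫`, whose left side is at least `2 t cos θ ‖h‖` by
AM-GM. Since `sin ϑ ≤ sin θ`, the bound on `R` leaves room for a `t` with `r + √d/2 < t sin ϑ`
and `t + √d/2 < R`, and a lattice point within `√d/2` of `x + t v` then works.
-/

lemma cos_mul_norm_lt_inner_of_norm_sub_smul_lt {E : Type*} [NormedAddCommGroup E]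
    [InnerProductSpace ℝ E] {v h : E} (hv : ‖v‖ = 1) {θ t : ℝ} (hθ : 0 ≤ Real.sin θ)
    (hh : ‖h - t • v‖ < t * Real.sin θ) :
    Real.cos θ * ‖h‖ < inner ℝ v h := by
  have ht : 0 < t := pos_of_mul_pos_left ((norm_nonneg _).trans_lt hh) hθ
  have hsq : ‖h - t • v‖ ^ 2 = ‖h‖ ^ 2 - 2 * t * inner ℝ v h + t ^ 2 := by
    rw [norm_sub_sq_real, real_inner_smul_right, real_inner_comm, norm_smul, hv,
      mul_one, Real.norm_eq_abs, sq_abs]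
    ring
  have hlt : ‖h‖ ^ 2 + t ^ 2 * Real.cos θ ^ 2 < 2 * t * inner ℝ v h := by
    nlinarith [Real.sin_sq_add_cos_sq θ, pow_lt_pow_left₀ hh (norm_nonneg _) two_ne_zero]
  nlinarith [sq_nonneg (‖h‖ - t * Real.cos θ)]

lemma mem_coneSet_of_norm_sub_smul_lt {d : ℕ} {v h : Euc d} (hv : ‖v‖ = 1) {θ t : ℝ}
    (hθ : 0 ≤ Real.sin θ) (hh : ‖h - t • v‖ < t * Real.sin θ) :
    h ∈ coneSet d v θ := by
  have hlt := cos_mul_norm_lt_inner_of_norm_sub_smul_lt hv hθ hh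
  have hh0 : h ≠ 0 := by
    rintro rfl
    simp at hlt
  exact ⟨hh0, (lt_div_iff₀ (norm_pos_iff.mpr hh0)).mpr hlt⟩

lemma EuclideanSpace.norm_le_sqrt_card_mul {ι : Type*} [Fintype ι] (x : EuclideanSpace ℝ ι)
    {a : ℝ} (ha : 0 ≤ a) (hx : ∀ i, |x i| ≤ a) :
    ‖x‖ ≤ √(Fintype.card ι) * a := by
  calc ‖x‖ = √(∑ i, ‖x i‖ ^ 2) := EuclideanSpace.norm_eq x
    _ ≤ √(∑ _ : ι, a ^ 2) := by
      gcongr with i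
      exact (Real.norm_eq_abs _).trans_le (hx i)
    _ = √(Fintype.card ι) * a := by
      rw [Finset.sum_const, Finset.card_univ, nsmul_eq_mul, Real.sqrt_mul (Nat.cast_nonneg _),
        Real.sqrt_sq ha]

lemma exists_dist_latt_le (d : ℕ) (c : Euc d) :
    ∃ z : Fin d → ℤ, dist (latt d z) c ≤ √d / 2 := by
  refine ⟨fun i => round (c i), ?_⟩
  rw [dist_eq_norm]
  calc ‖latt d (fun i => round (c i)) - c‖ ≤ √(Fintype.card (Fin d)) * (1 / 2) :=
        EuclideanSpace.norm_le_sqrt_card_mul _ (by norm_num) fun i => by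
          simpa [latt, abs_sub_comm] using abs_sub_round (c i)
    _ = √d / 2 := by rw [Fintype.card_fin]; ring

lemma exists_latt_closedBall_subset_cone {d : ℕ} {v : Euc d} (hv : ‖v‖ = 1) {θ r t : ℝ}
    (hθ : 0 ≤ Real.sin θ) (hr : 0 ≤ r) (ht : r + √d / 2 < t * Real.sin θ) (x : Euc d) :
    ∃ z : Fin d → ℤ, dist (latt d z) x ≤ t + √d / 2 ∧
      ∀ w ∈ closedBall (latt d z) r, w - x ∈ coneSet d v θ := by
  have ht0 : 0 < t := pos_of_mul_pos_left ((by positivity : (0 : ℝ) ≤ r + √d / 2).trans_lt ht) hθ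
  obtain ⟨z, hz⟩ := exists_dist_latt_le d (x + t • v)
  refine ⟨z, ?_, fun w hw => mem_coneSet_of_norm_sub_smul_lt (t := t) hv hθ ?_⟩
  · have hcx : dist (x + t • v) x = t := by
      rw [dist_self_add_left, norm_smul, hv, mul_one, Real.norm_of_nonneg ht0.le]
    linarith [dist_triangle (latt d z) (x + t • v) x]
  · calc ‖w - x - t • v‖ = dist w (x + t • v) := by rw [dist_eq_norm, sub_sub]
      _ ≤ dist w (latt d z) + dist (latt d z) (x + t • v) := dist_triangle _ _ _
      _ < t * Real.sin θ := by linarith [mem_closedBall.mp hw]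

theorem stmt14_general (d : ℕ) (ϑ : ℝ) (hϑ : ϑ ∈ Set.Ioc 0 (Real.pi / 2))
    (θ : ℝ) (hθ1 : ϑ ≤ θ) (hθ2 : θ ≤ Real.pi / 2) (v : Euc d) (hv : ‖v‖ = 1)
    (r R : ℝ) (hr : 0 < r) (hR : (r + Real.sqrt d) / Real.sin ϑ < R) (x : Euc d) :
    ∃ z : Fin d → ℤ, latt d z ∈ ball x R ∧ latt d z - x ∈ coneSet d v θ ∧
      ∀ w ∈ Metric.closedBall (latt d z) r, w - x ∈ coneSet d v θ := by
  obtain ⟨hϑ0, hϑ2⟩ := hϑ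
  have hs0 : 0 < Real.sin ϑ := Real.sin_pos_of_pos_of_lt_pi hϑ0 (by linarith [Real.pi_pos])
  have hsθ : Real.sin ϑ ≤ Real.sin θ :=
    Real.sin_le_sin_of_le_of_le_pi_div_two (by linarith [Real.pi_pos]) hθ2 hθ1
  have hroom : (r + √d / 2) / Real.sin ϑ < R - √d / 2 := by
    have hhalf : √d / 2 ≤ √d / 2 / Real.sin ϑ := le_div_self (by positivity) hs0 (Real.sin_le_one ϑ)
    have hsplit : (r + √d) / Real.sin ϑ = (r + √d / 2) / Real.sin ϑ + √d / 2 / Real.sin ϑ := by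
      ring
    linarith
  obtain ⟨t, hts, htR⟩ := exists_between hroom
  have ht : 0 < t := (by positivity : 0 < (r + √d / 2) / Real.sin ϑ).trans hts
  rw [div_lt_iff₀ hs0] at hts
  obtain ⟨z, hzx, hcone⟩ := exists_latt_closedBall_subset_cone hv (hs0.le.trans hsθ) hr.le
    (hts.trans_le (by gcongr)) x
  exact ⟨z, mem_ball.mpr (by linarith), hcone _ (mem_closedBall_self hr.le), hcone⟩

/-- Lemma 5.1 (1): finding a lattice point deep inside a shifted cone. -/
theorem stmt14 (d : ℕ) (hd : 1 ≤ d) (ϑ : ℝ) (hϑ : ϑ ∈ Set.Ioc 0 (Real.pi / 2))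
    (θ : ℝ) (hθ1 : ϑ ≤ θ) (hθ2 : θ ≤ Real.pi / 2) (v : Euc d) (hv : ‖v‖ = 1)
    (r R : ℝ) (hr : 0 < r) (hR : (r + Real.sqrt d) / Real.sin ϑ < R) (x : Euc d) :
    ∃ z : Fin d → ℤ, latt d z ∈ ball x R ∧ latt d z - x ∈ coneSet d v θ ∧
      ∀ w ∈ Metric.closedBall (latt d z) r, w - x ∈ coneSet d v θ :=
  stmt14_general d ϑ hϑ θ hθ1 hθ2 v hv r R hr hR x
end
end

section
/- Let d ≥ 1, ϑ ∈ (0, π/2], and let Γ be a ϑ-bounded configuration. Let x, y ∈ ℤ^d satisfy Γ(x) = Γ(y) and |x − y| < r for some r > 0. Then for every R > (r + √d)/sin(ϑ) + r there exists a lattice point z ∈ ℤ^d with z ∈ x + Γ(x), z ∈ y + Γ(y), |z − x| < R and |z − y| < R; in particular x and y are connected in the graph G(Γ) by a path of two edges, each of length less than R. -/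
open MeasureTheory Metric
open scoped ENNReal

noncomputable section

/-! For a unit vector `v` and `t > 0`, the ball of radius `t sin θ` around `t v` lies in the
cone `Ṽ(v, θ)`. Choose `t` with `t sin ϑ = r + √d / 2` and let `z` be the lattice point nearest
to `x + t v`, at distance at most `√d / 2`. Then `z - x` and `z - y` lie within `r + √d / 2`
of `t v`, hence in the cone `Γ(x) = Γ(y)`, and both have length less than
`t + √d / 2 + r ≤ (r + √d) / sin ϑ + r`. -/

open Real

lemma ball_smul_subset_coneSet {d : ℕ} {v : Euc d} (hv : ‖v‖ = 1) (θ : ℝ) {t : ℝ} (ht : 0 < t) :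
    ball (t • v) (t * sin θ) ⊆ coneSet d v θ := by
  intro h hh
  rw [mem_ball, dist_eq_norm] at hh
  have hexp : ‖h - t • v‖ ^ 2 = ‖h‖ ^ 2 - 2 * t * inner ℝ v h + t ^ 2 := by
    rw [norm_sub_sq_real, norm_smul, real_inner_smul_right, real_inner_comm, hv,
      Real.norm_eq_abs, mul_one, sq_abs]
    ring
  have hsq : ‖h - t • v‖ ^ 2 < (t * sin θ) ^ 2 :=
    pow_lt_pow_left₀ hh (norm_nonneg _) two_ne_zero
  -- `‖h - t v‖ < t sin θ` says `‖h‖² + t² cos² θ < 2 t ⟪v, h⟫`; AM-GM bounds the left side below.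
  have hcos : cos θ * ‖h‖ < inner ℝ v h := by
    nlinarith [sq_nonneg (‖h‖ - t * cos θ), sin_sq_add_cos_sq θ]
  have hne : h ≠ 0 := by
    rintro rfl
    simp at hcos
  exact ⟨hne, by rwa [lt_div_iff₀ (norm_pos_iff.2 hne)]⟩

lemma dist_latt_round_le {d : ℕ} (p : Euc d) :
    dist (latt d fun i => round (p i)) p ≤ √d / 2 := by
  have hcoord : ∀ i, dist ((latt d fun i => round (p i)) i) (p i) ^ 2 ≤ (1 / 2) ^ 2 := by
    intro i
    have : |(round (p i) : ℝ) - p i| ≤ 1 / 2 := by simpa [abs_sub_comm] using abs_sub_round (p i)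
    simpa [latt, Real.dist_eq] using pow_le_pow_left₀ (abs_nonneg _) this 2
  calc dist (latt d fun i => round (p i)) p
      = √(∑ i, dist ((latt d fun i => round (p i)) i) (p i) ^ 2) := EuclideanSpace.dist_eq _ _
    _ ≤ √(∑ _i : Fin d, (1 / 2 : ℝ) ^ 2) := sqrt_le_sqrt (Finset.sum_le_sum fun i _ => hcoord i)
    _ = √d / 2 := by
      rw [Finset.sum_const, Finset.card_univ, Fintype.card_fin, nsmul_eq_mul, sqrt_mul
        (Nat.cast_nonneg d), sqrt_sq (by norm_num)]
      ring

lemma exists_latt_sub_mem_coneSet {d : ℕ} {v : Euc d} (hv : ‖v‖ = 1) {θ s r R : ℝ}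
    (hs : 0 < s) (hsθ : s ≤ sin θ) {X Y : Euc d} (hXY : dist X Y < r)
    (hR : (r + √d) / s + r < R) :
    ∃ z : Fin d → ℤ, latt d z - X ∈ coneSet d v θ ∧ latt d z - Y ∈ coneSet d v θ ∧
      dist (latt d z) X < R ∧ dist (latt d z) Y < R := by
  have hr : 0 < r := dist_nonneg.trans_lt hXY
  set t := (r + √d / 2) / s with ht_def
  have ht : 0 < t := by positivity
  have hts : t * s = r + √d / 2 := div_mul_cancel₀ _ hs.ne'
  have hball : ball (t • v) (r + √d / 2) ⊆ coneSet d v θ :=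
    (ball_subset_ball (hts ▸ mul_le_mul_of_nonneg_left hsθ ht.le)).trans
      (ball_smul_subset_coneSet hv θ ht)
  set p := X + t • v
  set z := latt d fun i => round (p i)
  have hzX : dist (z - X) (t • v) ≤ √d / 2 := by
    rw [dist_eq_norm, sub_sub, ← dist_eq_norm]
    exact dist_latt_round_le p
  have hzY : dist (z - Y) (t • v) < r + √d / 2 := by
    calc dist (z - Y) (t • v) ≤ dist (z - Y) (z - X) + dist (z - X) (t • v) := dist_triangle _ _ _
      _ < r + √d / 2 := by rw [dist_sub_left, dist_comm]; linarith
  have hdX : dist z X ≤ t + √d / 2 := by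
    calc dist z X = dist (z - X) 0 := by rw [dist_zero_right, dist_eq_norm]
      _ ≤ dist (z - X) (t • v) + dist (t • v) 0 := dist_triangle _ _ _
      _ ≤ √d / 2 + t := by
        rw [dist_zero_right, norm_smul, hv, Real.norm_of_nonneg ht.le, mul_one]
        linarith
      _ = t + √d / 2 := add_comm _ _
  have hbudget : t + √d / 2 ≤ (r + √d) / s := by
    have hs1 : s ≤ 1 := hsθ.trans (sin_le_one θ)
    have : √d / 2 ≤ √d / 2 / s := le_div_self (by positivity) hs hs1
    rw [show (r + √d) / s = t + √d / 2 / s by rw [ht_def]; ring]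
    linarith
  refine ⟨fun i => round (p i), hball ?_, hball ?_, ?_, ?_⟩
  · exact mem_ball.2 (hzX.trans_lt (by linarith))
  · exact mem_ball.2 hzY
  · linarith
  · linarith [dist_triangle z X Y]

theorem stmt16_general (d : ℕ) (ϑ : ℝ) (hϑ : ϑ ∈ Set.Ioc 0 (Real.pi / 2))
    (Γ : Config d) (hΓ : Γ.Bounded ϑ) (x y : Fin d → ℤ) (r : ℝ)
    (hsame : Γ.cone (latt d x) = Γ.cone (latt d y))
    (hdist : dist (latt d x) (latt d y) < r)
    (R : ℝ) (hR : (r + Real.sqrt d) / Real.sin ϑ + r < R) :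
    ∃ z : Fin d → ℤ,
      latt d z - latt d x ∈ Γ.cone (latt d x) ∧
      latt d z - latt d y ∈ Γ.cone (latt d y) ∧
      dist (latt d z) (latt d x) < R ∧ dist (latt d z) (latt d y) < R ∧
      adjL d Γ x z ∧ adjL d Γ z y := by
  obtain ⟨hϑ0, hϑπ⟩ := hϑ
  have hsin : sin ϑ ≤ sin (Γ.angle (latt d x)) :=
    sin_le_sin_of_le_of_le_pi_div_two (by linarith [pi_pos]) (Γ.angle_mem _).2 (hΓ _)
  have hsin_pos : 0 < sin ϑ := sin_pos_of_pos_of_lt_pi hϑ0 (by linarith [pi_pos])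
  obtain ⟨z, hzx, hzy, hdx, hdy⟩ :=
    exists_latt_sub_mem_coneSet (Γ.axis_norm _) hsin_pos hsin hdist hR
  have hx : latt d z - latt d x ∈ Γ.cone (latt d x) := Or.inl hzx
  have hy : latt d z - latt d y ∈ Γ.cone (latt d y) := hsame ▸ Or.inl hzy
  exact ⟨z, hx, hy, hdx, hdy, Or.inl hx, Or.inr hy⟩

/-- Corollary 5.2: two nearby lattice points of the same cone type are
connected in `G(Γ)` through a common lattice point of their shifted cones, via a path of two
edges each of length less than `R`. -/
theorem stmt16 (d : ℕ) (hd : 1 ≤ d) (ϑ : ℝ) (hϑ : ϑ ∈ Set.Ioc 0 (Real.pi / 2))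
    (Γ : Config d) (hΓ : Γ.Bounded ϑ) (x y : Fin d → ℤ) (r : ℝ) (hr : 0 < r)
    (hsame : Γ.cone (latt d x) = Γ.cone (latt d y))
    (hdist : dist (latt d x) (latt d y) < r)
    (R : ℝ) (hR : (r + Real.sqrt d) / Real.sin ϑ + r < R) :
    ∃ z : Fin d → ℤ,
      latt d z - latt d x ∈ Γ.cone (latt d x) ∧
      latt d z - latt d y ∈ Γ.cone (latt d y) ∧
      dist (latt d z) (latt d x) < R ∧ dist (latt d z) (latt d y) < R ∧
      adjL d Γ x z ∧ adjL d Γ z y :=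
  stmt16_general d ϑ hϑ Γ hΓ x y r hsame hdist R hR
end
end
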